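/- arXiv:1404.3629 — 2 statements merged into one kernel-verified Lean document; each statement's English description precedes it below -/
import Mathlib

section
/- Let C be any initial scatterer configuration on the honeycomb lattice and I an initial state. Then the particle trajectory of the flipping rotator system (H_fr, I, C), evolved by r(t+1) = r(t) + v(t), v(t+1) = R[C_h(t)] v(t) when r(t+1) = h, with the scatterer at the visited site flipping sign, is equal for all times t ≥ 0 to the particle trajectory of the flipping mirror system (H_fm, I, φ(C)), whose velocity update is v(t+1) = R[C_h(t)] v(t) if the visited site h ∈ ℍ⁺ and v(t+1) = R[−C_h(t)] v(t) if h ∈ ℍ⁻, with the same flipping rule. Symmetrically, (H_fm, I, C) and (H_fr, I, φ(C)) have the same trajectory. -/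
open Real

attribute [local instance] Classical.propDecidable

noncomputable section

/-- Points of the plane. -/
abbrev Pt : Type := ℝ × ℝ

/-- Sites of the regular honeycomb lattice with unit bonds, containing the origin,
with a horizontal bond from `(0,0)` to `(1,0)`. -/
def HSet : Set Pt :=
  {p | ∃ m n : ℤ,
    p = ((3/2) * (m : ℝ) + (3/2) * (n : ℝ),
         (Real.sqrt 3 / 2) * (m : ℝ) - (Real.sqrt 3 / 2) * (n : ℝ)) ∨
    p = ((3/2) * (m : ℝ) + (3/2) * (n : ℝ) + 1,
         (Real.sqrt 3 / 2) * (m : ℝ) - (Real.sqrt 3 / 2) * (n : ℝ))}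

/-- Sites at the right end of their horizontal bond. -/
def Hplus : Set Pt := {h | h ∈ HSet ∧ h - ((1 : ℝ), (0 : ℝ)) ∈ HSet}

/-- Sites at the left end of their horizontal bond. -/
def Hminus : Set Pt := {h | h ∈ HSet ∧ h + ((1 : ℝ), (0 : ℝ)) ∈ HSet}

/-- The rotation operator `R(z)`, rotating a velocity by the angle `πz/3` according to the
matrix `[[cos(πz/3), sin(πz/3)], [−sin(πz/3), cos(πz/3)]]`. -/
def Rot (z : ℤ) (v : Pt) : Pt :=
  (Real.cos ((z : ℝ) * Real.pi / 3) * v.1 + Real.sin ((z : ℝ) * Real.pi / 3) * v.2,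
   -Real.sin ((z : ℝ) * Real.pi / 3) * v.1 + Real.cos ((z : ℝ) * Real.pi / 3) * v.2)

/-- A configuration of scatterer orientations. -/
abbrev Config : Type := Pt → ℤ

/-- A configuration is valid if every orientation is `±1`. -/
def ValidConfig (C : Config) : Prop := ∀ h, C h = 1 ∨ C h = -1

/-- The full state of a Lorentz lattice gas: particle position, particle velocity,
and the current configuration of scatterers. -/
structure LLGState where
  pos : Pt
  vel : Pt
  cfg : Config

/-- One time step of the flipping rotator dynamics: the particle moves to `r' = r + v`,
its velocity is rotated by the scatterer at `r'`, and that scatterer flips. -/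
def frStep (s : LLGState) : LLGState :=
  let r' := s.pos + s.vel
  { pos := r'
    vel := Rot (s.cfg r') s.vel
    cfg := fun h => if h = r' then -s.cfg h else s.cfg h }

/-- One time step of the flipping mirror dynamics: as for rotators but the scattering
uses orientation `C_h` at sites of `ℍ⁺` and `−C_h` at other (i.e. `ℍ⁻`) sites. -/
def fmStep (s : LLGState) : LLGState :=
  let r' := s.pos + s.vel
  { pos := r'
    vel := Rot (if r' ∈ Hplus then s.cfg r' else -s.cfg r') s.vel
    cfg := fun h => if h = r' then -s.cfg h else s.cfg h }

/-- The state of the flipping rotator system `(H_fr, (r,v), C)` at time `t`. -/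
def frTraj (r v : Pt) (C : Config) (t : ℕ) : LLGState := frStep^[t] ⟨r, v, C⟩

/-- The state of the flipping mirror system `(H_fm, (r,v), C)` at time `t`. -/
def fmTraj (r v : Pt) (C : Config) (t : ℕ) : LLGState := fmStep^[t] ⟨r, v, C⟩

/-- The particle's position at time `t` in the flipping rotator system. -/
def frPos (r v : Pt) (C : Config) (t : ℕ) : Pt := (frTraj r v C t).pos

/-- A valid initial state: the particle sits at a lattice site and moves with unit speed
along a lattice bond. -/
def IsInitial (r v : Pt) : Prop :=
  r ∈ HSet ∧ r + v ∈ HSet ∧ v.1 ^ 2 + v.2 ^ 2 = 1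

/-- The map `φ` flipping the orientation of every scatterer at a site of `ℍ⁻`
(and fixing those of `ℍ⁺`). -/
def phi (C : Config) : Config := fun h => if h ∈ Hplus then C h else -C h

/-- Centers of the hexagons of the honeycomb lattice. -/
def hexCenter (m n : ℤ) : Pt :=
  (1/2 + (3/2) * (m : ℝ) + (3/2) * (n : ℝ),
   Real.sqrt 3 / 2 + (Real.sqrt 3 / 2) * (m : ℝ) - (Real.sqrt 3 / 2) * (n : ℝ))

/-- The `k`-th vertex of the unit hexagon with center `c`. -/
def vtx (c : Pt) (k : Fin 6) : Pt :=
  (c.1 + Real.cos ((k.1 : ℝ) * Real.pi / 3), c.2 + Real.sin ((k.1 : ℝ) * Real.pi / 3))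

/-- The six sites of the unit hexagon with center `c`. -/
def hexSites (c : Pt) : Set Pt := {p | ∃ k : Fin 6, p = vtx c k}

/-- `S` is (the site set of) a hexagon of the honeycomb lattice. -/
def IsHexagon (S : Set Pt) : Prop := ∃ m n : ℤ, S = hexSites (hexCenter m n)

/-- A particle with positions `p` enters `Ω` at time `t1` and exits at `t2`. -/
def CrossesDuring (p : ℕ → Pt) (Ω : Set Pt) (t1 t2 : ℕ) : Prop :=
  0 < t1 ∧ t1 ≤ t2 ∧ (∀ t, t1 ≤ t → t ≤ t2 → p t ∈ Ω) ∧
    p (t1 - 1) ∉ Ω ∧ p (t2 + 1) ∉ Ω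

/-- The particle induces a transition from the hexagon configuration `α` to `β` on `S`:
for some flipping rotator system, the hexagon `S` carries configuration `α` just before
the particle enters it and configuration `β` just after it exits. -/
def HexTransition (S : Set Pt) (α β : Config) : Prop :=
  ∃ (r v : Pt) (C : Config) (t1 t2 : ℕ), IsInitial r v ∧ ValidConfig C ∧
    CrossesDuring (frPos r v C) S t1 t2 ∧
    Set.EqOn ((frTraj r v C (t1 - 1)).cfg) α S ∧
    Set.EqOn ((frTraj r v C (t2 + 1)).cfg) β S

/-- The relation `∼`: transformability by a sequence of particle-induced transitions. -/
def HexEquiv (S : Set Pt) : Config → Config → Prop :=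
  Relation.EqvGen (HexTransition S)

/-- A configuration is admissible if, on every hexagon of the lattice, it is equivalent
(under particle-induced transitions) to the all-right-rotator configuration. -/
def Admissible (C : Config) : Prop :=
  ∀ S, IsHexagon S → HexEquiv S C (fun _ => 1)

/-- A blocking configuration: there is a finite time `τ_b` such that from every initial
condition the particle returns to its initial position within `τ_b` steps. -/
def Blocking (C : Config) : Prop :=
  ∃ τb : ℕ, ∀ r v, IsInitial r v → ∃ t, 0 < t ∧ t ≤ τb ∧ frPos r v C t = r

/-- The configuration of all right rotators. -/
def allRight : Config := fun _ => 1

/-- `ℓ` is a local crossing of `Ω` with configuration `C`: the list of positions of a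
particle which enters `Ω` (with `C` the configuration at entry) and later exits it. -/
def IsLocalCrossing (Ω : Set Pt) (C : Config) (ℓ : List Pt) : Prop :=
  ∃ (r v : Pt) (n : ℕ), IsInitial r v ∧ r ∉ Ω ∧ 1 ≤ n ∧
    (∀ t, 1 ≤ t → t ≤ n → frPos r v C t ∈ Ω) ∧
    frPos r v C (n + 1) ∉ Ω ∧
    ℓ = (List.range n).map (fun t => frPos r v C (t + 1))

/-- `ℓ` is a local cycle of `Ω` with configuration `C`: a self-avoiding closed trajectory
inside `Ω` whose final velocity equals its initial velocity. -/
def IsLocalCycle (Ω : Set Pt) (C : Config) (ℓ : List Pt) : Prop :=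
  ∃ (r v : Pt) (n : ℕ), IsInitial r v ∧ 1 ≤ n ∧
    (∀ t, t ≤ n → frPos r v C t ∈ Ω) ∧
    frPos r v C n = r ∧ (frTraj r v C n).vel = v ∧
    (∀ s t, s < t → t < n → frPos r v C s ≠ frPos r v C t) ∧
    ℓ = (List.range n).map (fun t => frPos r v C t)

/-- A local trajectory of `Ω`: a local crossing or a local cycle. -/
def IsLocalTraj (Ω : Set Pt) (C : Config) (ℓ : List Pt) : Prop :=
  IsLocalCrossing Ω C ℓ ∨ IsLocalCycle Ω C ℓ

/-- The lattice configuration realizing the hexagon configuration `f` on the hexagon with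
center `c` (all right rotators elsewhere). -/
def cfgOf (c : Pt) (f : Fin 6 → Bool) : Config :=
  fun p => if h : ∃ k : Fin 6, p = vtx c k then (if f h.choose then 1 else -1) else 1

/-- Two hexagon configurations are related by a rotation or reflection of the hexagon. -/
def DihRel (f g : Fin 6 → Bool) : Prop :=
  ∃ j : Fin 6, (∀ k, g k = f (k + j)) ∨ (∀ k, g k = f (j - k))

end

/-! `φ`, extended to states by acting on the configuration only, conjugates the flipping
rotator dynamics to the flipping mirror dynamics and back: at the visited site a mirror of
`φ(C)` scatters like the rotator of `C` (at `ℍ⁻` it reads `−φ(C)_h = C_h`), and `φ` commutes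
with flipping a single scatterer. -/

noncomputable def phiState (s : LLGState) : LLGState := ⟨s.pos, s.vel, phi s.cfg⟩

lemma phi_flip (C : Config) (r : Pt) :
    phi (fun h => if h = r then -C h else C h) = fun h => if h = r then -phi C h else phi C h := by
  funext h
  simp only [phi]
  split_ifs <;> rfl

lemma mirror_orientation_phi (C : Config) (h : Pt) :
    (if h ∈ Hplus then phi C h else -phi C h) = C h := by
  simp only [phi]
  split_ifs <;> simp

lemma semiconj_phiState_frStep : Function.Semiconj phiState frStep fmStep := fun s => by
  dsimp only [phiState, frStep, fmStep]
  rw [mirror_orientation_phi, phi_flip]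

lemma semiconj_phiState_fmStep : Function.Semiconj phiState fmStep frStep := fun s => by
  dsimp only [phiState, frStep, fmStep]
  rw [phi_flip]
  rfl

lemma fmTraj_phi (r v : Pt) (C : Config) (t : ℕ) :
    fmTraj r v (phi C) t = phiState (frTraj r v C t) :=
  (semiconj_phiState_frStep.iterate_right t ⟨r, v, C⟩).symm

lemma frTraj_phi (r v : Pt) (C : Config) (t : ℕ) :
    frTraj r v (phi C) t = phiState (fmTraj r v C t) :=
  (semiconj_phiState_fmStep.iterate_right t ⟨r, v, C⟩).symm

theorem stmt_10_general (C : Config) (r v : Pt) :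
    (∀ t : ℕ, (frTraj r v C t).pos = (fmTraj r v (phi C) t).pos) ∧
    (∀ t : ℕ, (fmTraj r v C t).pos = (frTraj r v (phi C) t).pos) :=
  ⟨fun t => (congrArg LLGState.pos (fmTraj_phi r v C t)).symm,
    fun t => (congrArg LLGState.pos (frTraj_phi r v C t)).symm⟩

/-- For any initial configuration `C` and initial state `(r,v)`, the flipping rotator
system `(H_fr, I, C)` and the flipping mirror system `(H_fm, I, φ(C))` give the particle
the same trajectory; symmetrically, `(H_fm, I, C)` and `(H_fr, I, φ(C))` have the same
trajectory. -/
theorem stmt_10 (C : Config) (r v : Pt) (hC : ValidConfig C) (hI : IsInitial r v) :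
    (∀ t : ℕ, (frTraj r v C t).pos = (fmTraj r v (phi C) t).pos) ∧
    (∀ t : ℕ, (fmTraj r v C t).pos = (frTraj r v (phi C) t).pos) :=
  stmt_10_general C r v
end

section
/- Let (H, I, C) be a flipping rotator system with admissible configuration C, and suppose γ = {r(t) : 0 ≤ t ≤ T} is a local cycle (r(0) = r(T), v(0) = v(T), all intermediate positions distinct). Then the cycle is baseless: for any 0 < s < T, the particle started in the system (H, J, C) with initial state J = (r(s), v(s)) traverses exactly the same set of lattice sites, returning to r(s) after T steps, i.e., its trajectory over [0, T] equals γ as a set of positions. -/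
open Real

attribute [local instance] Classical.propDecidable

/-!
Flipping the scatterers on a set `A` commutes with a step of the dynamics whenever the particle
does not land in `A`. Along a self-avoiding cycle the configuration at time `t` is `C` flipped on
`A_t = {r(1), …, r(t)}`. Hence the initial state `(r(s), v(s), C)` of the restarted particle is the
state of the original run at time `s` flipped on `A_s`, and the restarted particle follows the
original run from `r(s)` to `r(T) = r(0)` without touching `A_s`. It then stands at `(r, v)` with
`C` flipped on the rest of the cycle, so it retraces `r(1), …, r(s)`.
-/

noncomputable def flipOn (A : Set Pt) (C : Config) : Config :=
  fun h => if h ∈ A then -C h else C h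

lemma flipOn_of_notMem {A : Set Pt} {h : Pt} (hh : h ∉ A) (C : Config) : flipOn A C h = C h :=
  if_neg hh

lemma flipOn_empty (C : Config) : flipOn ∅ C = C :=
  funext fun h => flipOn_of_notMem (Set.notMem_empty h) C

lemma flipOn_comm (A B : Set Pt) (C : Config) :
    flipOn A (flipOn B C) = flipOn B (flipOn A C) := by
  funext h
  simp only [flipOn]
  split_ifs <;> rfl

lemma flipOn_flipOn_of_subset {A B : Set Pt} (hAB : A ⊆ B) (C : Config) :
    flipOn A (flipOn B C) = flipOn (B \ A) C := by
  funext h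
  by_cases hA : h ∈ A
  · simp [flipOn, hA, hAB hA]
  · simp [flipOn, hA]

lemma flipOn_flipOn_self (A : Set Pt) (C : Config) : flipOn A (flipOn A C) = C := by
  rw [flipOn_flipOn_of_subset subset_rfl, Set.sdiff_self, flipOn_empty]

lemma flipOn_insert {A : Set Pt} {a : Pt} (ha : a ∉ A) (C : Config) :
    flipOn {a} (flipOn A C) = flipOn (insert a A) C := by
  funext h
  by_cases hh : h = a
  · simp [flipOn, hh, ha]
  · simp [flipOn, hh]

noncomputable def LLGState.flip (A : Set Pt) (σ : LLGState) : LLGState :=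
  ⟨σ.pos, σ.vel, flipOn A σ.cfg⟩

lemma frStep_cfg (σ : LLGState) : (frStep σ).cfg = flipOn {σ.pos + σ.vel} σ.cfg := by
  funext h
  simp [frStep, flipOn]

lemma frStep_flip {A : Set Pt} {σ : LLGState} (hσ : σ.pos + σ.vel ∉ A) :
    frStep (σ.flip A) = (frStep σ).flip A := by
  have hcfg : (frStep (σ.flip A)).cfg = ((frStep σ).flip A).cfg := by
    rw [frStep_cfg]
    show flipOn {σ.pos + σ.vel} (flipOn A σ.cfg) = flipOn A (frStep σ).cfg
    rw [frStep_cfg, flipOn_comm]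
  have hvel : (frStep (σ.flip A)).vel = ((frStep σ).flip A).vel :=
    congrArg (Rot · σ.vel) (flipOn_of_notMem hσ σ.cfg)
  exact congrArg₂ (LLGState.mk _) hvel hcfg

section Trajectory

variable {r v : Pt} {C : Config}

lemma frTraj_succ (t : ℕ) : frTraj r v C (t + 1) = frStep (frTraj r v C t) :=
  Function.iterate_succ_apply' frStep t _

lemma frPos_succ (t : ℕ) : frPos r v C (t + 1) = frPos r v C t + (frTraj r v C t).vel := by
  rw [frPos, frTraj_succ]
  rfl

lemma frTraj_cfg_succ (t : ℕ) :
    (frTraj r v C (t + 1)).cfg = flipOn {frPos r v C (t + 1)} (frTraj r v C t).cfg := by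
  rw [frPos_succ, frTraj_succ, frStep_cfg]
  rfl

lemma frTraj_add (s t : ℕ) :
    frTraj r v C (s + t) =
      frTraj (frTraj r v C s).pos (frTraj r v C s).vel (frTraj r v C s).cfg t := by
  rw [frTraj, add_comm, Function.iterate_add_apply]
  rfl

lemma frPos_add (s t : ℕ) :
    frPos r v C (s + t) = frPos (frPos r v C s) (frTraj r v C s).vel (frTraj r v C s).cfg t :=
  congrArg LLGState.pos (frTraj_add s t)

lemma frTraj_flipOn {A : Set Pt} {n : ℕ} (hA : ∀ k ∈ Set.Icc 1 n, frPos r v C k ∉ A) :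
    frTraj r v (flipOn A C) n = (frTraj r v C n).flip A := by
  induction n with
  | zero => rfl
  | succ n ih =>
    have hnext := hA (n + 1) ⟨n.succ_pos, le_rfl⟩
    rw [frPos_succ] at hnext
    rw [frTraj_succ, frTraj_succ, ih fun k hk => hA k ⟨hk.1, hk.2.trans n.le_succ⟩,
      frStep_flip hnext]

lemma frTraj_cfg_of_injOn {n : ℕ} (hinj : Set.InjOn (frPos r v C) (Set.Icc 1 n)) :
    (frTraj r v C n).cfg = flipOn (frPos r v C '' Set.Icc 1 n) C := by
  induction n with
  | zero => simp [frTraj, flipOn_empty]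
  | succ n ih =>
    have hsub : Set.Icc 1 n ⊆ Set.Icc 1 (n + 1) := Set.Icc_subset_Icc_right n.le_succ
    have hnew : frPos r v C (n + 1) ∉ frPos r v C '' Set.Icc 1 n := by
      rintro ⟨k, hk, hkn⟩
      have := hinj (hsub hk) ⟨n.succ_pos, le_rfl⟩ hkn
      have := hk.2
      omega
    rw [frTraj_cfg_succ, ih (hinj.mono hsub), flipOn_insert hnew, ← Set.image_insert_eq,
      Set.insert_Icc_right_eq_Icc_add_one (by omega)]

end Trajectory

lemma injOn_Icc_one_of_pairwise_ne {α : Type*} {f : ℕ → α} {T : ℕ} (hT : f T = f 0)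
    (hf : ∀ s t, s < t → t < T → f s ≠ f t) : Set.InjOn f (Set.Icc 1 T) := by
  have hlt : ∀ a b, 1 ≤ a → a < b → b ≤ T → f a ≠ f b := by
    intro a b ha hab hb
    rcases hb.lt_or_eq with hb | rfl
    · exact hf a b hab hb
    · rw [hT]
      exact (hf 0 a ha hab).symm
  intro a ha b hb hab
  rcases lt_trichotomy a b with h | h | h
  · exact absurd hab (hlt a b ha.1 h hb.2)
  · exact h
  · exact absurd hab.symm (hlt b a hb.1 h ha.2)

section Cycle

variable {r v : Pt} {C : Config} {T s : ℕ}
  (hinj : Set.InjOn (frPos r v C) (Set.Icc 1 T))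

include hinj in
lemma frTraj_restart {t : ℕ} (ht : s + t ≤ T) :
    frTraj (frPos r v C s) (frTraj r v C s).vel C t =
      (frTraj r v C (s + t)).flip (frPos r v C '' Set.Icc 1 s) := by
  set A := frPos r v C '' Set.Icc 1 s
  have hs : Set.Icc 1 s ⊆ Set.Icc 1 T := Set.Icc_subset_Icc_right (by omega)
  have hC : C = flipOn A (frTraj r v C s).cfg := by
    rw [frTraj_cfg_of_injOn (hinj.mono hs), flipOn_flipOn_self]
  calc frTraj (frPos r v C s) (frTraj r v C s).vel C t
      = frTraj (frPos r v C s) (frTraj r v C s).vel (flipOn A (frTraj r v C s).cfg) t := by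
        rw [← hC]
    _ = (frTraj r v C (s + t)).flip A := by
        rw [frTraj_flipOn, frTraj_add]
        · rfl
        rintro k ⟨hk1, hkt⟩ ⟨j, hj, hjk⟩
        rw [← frPos_add] at hjk
        have := hinj (hs hj) ⟨by omega, by omega⟩ hjk
        have := hj.2
        omega

include hinj in
lemma frTraj_restart_wrap (hclose : frPos r v C T = r) (hvel : (frTraj r v C T).vel = v)
    (hs : s ≤ T) {u : ℕ} (hu : u ≤ s) :
    frTraj (frPos r v C s) (frTraj r v C s).vel C (T - s + u) =
      (frTraj r v C u).flip (frPos r v C '' Set.Icc 1 T \ frPos r v C '' Set.Icc 1 s) := by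
  have hsT : Set.Icc 1 s ⊆ Set.Icc 1 T := Set.Icc_subset_Icc_right hs
  have hloop : frTraj (frPos r v C s) (frTraj r v C s).vel C (T - s) =
      ⟨r, v, flipOn (frPos r v C '' Set.Icc 1 T \ frPos r v C '' Set.Icc 1 s) C⟩ := by
    rw [frTraj_restart hinj (by omega : s + (T - s) ≤ T), Nat.add_sub_cancel' hs,
      LLGState.flip, frTraj_cfg_of_injOn hinj, flipOn_flipOn_of_subset (Set.image_mono hsT),
      LLGState.mk.injEq]
    exact ⟨hclose, hvel, rfl⟩
  rw [frTraj_add, hloop]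
  exact frTraj_flipOn fun k hk hk' => hk'.2 ⟨k, ⟨hk.1, hk.2.trans hu⟩, rfl⟩

end Cycle

theorem stmt_19_general (C : Config) (r v : Pt) (T : ℕ)
    (hclose : frPos r v C T = r) (hvel : (frTraj r v C T).vel = v)
    (hdist : ∀ s t, s < t → t < T → frPos r v C s ≠ frPos r v C t) :
    ∀ s, 0 < s → s < T →
      frPos (frPos r v C s) ((frTraj r v C s).vel) C T = frPos r v C s ∧
      {x | ∃ t ≤ T, frPos (frPos r v C s) ((frTraj r v C s).vel) C t = x} =
        {x | ∃ t ≤ T, frPos r v C t = x} := by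
  intro s _ hsT
  have hinj := injOn_Icc_one_of_pairwise_ne hclose hdist
  have hfirst : ∀ t, s + t ≤ T →
      frPos (frPos r v C s) (frTraj r v C s).vel C t = frPos r v C (s + t) :=
    fun t ht => (congrArg LLGState.pos (frTraj_restart hinj ht) :)
  have hsecond : ∀ u ≤ s,
      frPos (frPos r v C s) (frTraj r v C s).vel C (T - s + u) = frPos r v C u :=
    fun u hu => (congrArg LLGState.pos (frTraj_restart_wrap hinj hclose hvel hsT.le hu) :)
  refine ⟨by simpa [Nat.sub_add_cancel hsT.le] using hsecond s le_rfl, ?_⟩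
  ext x
  constructor
  · rintro ⟨t, ht, rfl⟩
    rcases le_or_gt (s + t) T with h | h
    · exact ⟨s + t, h, (hfirst t h).symm⟩
    · obtain ⟨u, rfl⟩ : ∃ u, t = T - s + u := ⟨t - (T - s), by omega⟩
      exact ⟨u, by omega, (hsecond u (by omega)).symm⟩
  · rintro ⟨t, ht, rfl⟩
    rcases le_or_gt t s with h | h
    · exact ⟨T - s + t, by omega, hsecond t h⟩
    · obtain ⟨u, rfl⟩ : ∃ u, t = s + u := ⟨t - s, by omega⟩
      exact ⟨u, by omega, hfirst u ht⟩

/-- Local cycles are baseless.  Let `C` be admissible and suppose the trajectory of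
`(H, (r,v), C)` up to time `T` is a local cycle (`r(T) = r`, `v(T) = v`, all intermediate
positions distinct).  Then for any `0 < s < T`, the particle started from
`J = (r(s), v(s))` in the system `(H, J, C)` returns to `r(s)` after `T` steps and its
trajectory over `[0, T]` equals the cycle as a set of positions. -/
theorem stmt_19 (C : Config) (r v : Pt) (hC : ValidConfig C) (hA : Admissible C)
    (hI : IsInitial r v) (T : ℕ) (hT : 1 ≤ T)
    (hclose : frPos r v C T = r) (hvel : (frTraj r v C T).vel = v)
    (hdist : ∀ s t, s < t → t < T → frPos r v C s ≠ frPos r v C t) :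
    ∀ s, 0 < s → s < T →
      frPos (frPos r v C s) ((frTraj r v C s).vel) C T = frPos r v C s ∧
      {x | ∃ t ≤ T, frPos (frPos r v C s) ((frTraj r v C s).vel) C t = x} =
        {x | ∃ t ≤ T, frPos r v C t = x} :=
  stmt_19_general C r v T hclose hvel hdist
end
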